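/- arXiv:math/0103008 — 6 statements merged into one kernel-verified Lean document; each statement's English description precedes it below -/
import Mathlib

section
/- If B₁ and B₂ are normal crystals, then the tensor product crystal B₁ ⊗ B₂ is normal: for every b₁ ⊗ b₂ ∈ B₁ ⊗ B₂ and every k ∈ I one has ε_k(b₁⊗b₂) = max{n ≥ 0 : ẽ_k^n(b₁⊗b₂) ≠ 0} and φ_k(b₁⊗b₂) = max{n ≥ 0 : f̃_k^n(b₁⊗b₂) ≠ 0}. -/
/-!
Crystals associated with a root datum: a free `ℤ`-module `P` (weight lattice),
simple roots `α k ∈ P` and simple coroots `co k : P →+ ℤ` for `k` in an index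
set `I`.  The string functions `ε, φ` take values in `ℤ ∪ {−∞}`, modeled by
`WithBot ℤ`, and the Kashiwara operators `ẽ, f̃` take values in `B ⊔ {0}`,
modeled by `Option B` (`none` playing the role of `0`).
-/

noncomputable section

/-- The underlying data of a crystal on a set `B`. -/
structure PreCrystal (I : Type*) (P : Type*) (B : Type*) where
  wt : B → P
  eps : I → B → WithBot ℤ
  phi : I → B → WithBot ℤ
  e : I → B → Option B
  f : I → B → Option B

/-- The crystal axioms (i)–(v). -/
structure IsCrystal {I P B : Type*} [AddCommGroup P]
    (α : I → P) (co : I → P →+ ℤ) (c : PreCrystal I P B) : Prop where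
  phi_eq : ∀ k b, c.phi k b = c.eps k b + (co k (c.wt b) : WithBot ℤ)
  wt_e : ∀ k b b', c.e k b = some b' → c.wt b' = c.wt b + α k
  eps_e : ∀ k b b', c.e k b = some b' → c.eps k b' + 1 = c.eps k b
  phi_e : ∀ k b b', c.e k b = some b' → c.phi k b' = c.phi k b + 1
  wt_f : ∀ k b b', c.f k b = some b' → c.wt b' = c.wt b - α k
  eps_f : ∀ k b b', c.f k b = some b' → c.eps k b' = c.eps k b + 1
  phi_f : ∀ k b b', c.f k b = some b' → c.phi k b' + 1 = c.phi k b
  ef_iff : ∀ k b b', c.f k b = some b' ↔ c.e k b' = some b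
  e_bot : ∀ k b, c.phi k b = ⊥ → c.e k b = none
  f_bot : ∀ k b, c.phi k b = ⊥ → c.f k b = none

/-- `n`-th iterate `ẽ_k^n` of the Kashiwara operator `ẽ_k` (with value in
`B ⊔ {0}`, where `0` is absorbing). -/
def PreCrystal.eIter {I P B : Type*} (c : PreCrystal I P B) (k : I) :
    ℕ → B → Option B
  | 0, b => some b
  | n + 1, b => (c.e k b).bind (c.eIter k n)

/-- `n`-th iterate `f̃_k^n` of the Kashiwara operator `f̃_k`. -/
def PreCrystal.fIter {I P B : Type*} (c : PreCrystal I P B) (k : I) :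
    ℕ → B → Option B
  | 0, b => some b
  | n + 1, b => (c.f k b).bind (c.fIter k n)

/-- A crystal is normal if `ε_k(b) = max {n ≥ 0 : ẽ_k^n b ≠ 0}` and
`φ_k(b) = max {n ≥ 0 : f̃_k^n b ≠ 0}`. -/
def PreCrystal.IsNormal {I P B : Type*} (c : PreCrystal I P B) : Prop :=
  ∀ (k : I) (b : B),
    (∃ n : ℕ, c.eIter k n b ≠ none ∧ c.eIter k (n + 1) b = none ∧
      c.eps k b = ((n : ℤ) : WithBot ℤ)) ∧
    (∃ n : ℕ, c.fIter k n b ≠ none ∧ c.fIter k (n + 1) b = none ∧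
      c.phi k b = ((n : ℤ) : WithBot ℤ))

/-- The tensor product data on `B₁ × B₂`:
`wt(b₁⊗b₂) = wt b₁ + wt b₂`, `ε_k(b₁⊗b₂) = max(ε_k(b₁), ε_k(b₂) − wt_k(b₁))`,
`φ_k(b₁⊗b₂) = max(φ_k(b₂), φ_k(b₁) + wt_k(b₂))`,
`ẽ_k` acts on the first factor if `φ_k(b₁) ≥ ε_k(b₂)` and on the second one
otherwise, and `f̃_k` acts on the first factor if `φ_k(b₁) > ε_k(b₂)` and on
the second one otherwise (with `b₁ ⊗ 0 = 0 ⊗ b₂ = 0`, via `Option.map`). -/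
def PreCrystal.tensor {I P B₁ B₂ : Type*} [AddCommGroup P] (co : I → P →+ ℤ)
    (c₁ : PreCrystal I P B₁) (c₂ : PreCrystal I P B₂) :
    PreCrystal I P (B₁ × B₂) where
  wt b := c₁.wt b.1 + c₂.wt b.2
  eps k b := max (c₁.eps k b.1) (c₂.eps k b.2 + ((-(co k (c₁.wt b.1)) : ℤ) : WithBot ℤ))
  phi k b := max (c₂.phi k b.2) (c₁.phi k b.1 + ((co k (c₂.wt b.2) : ℤ) : WithBot ℤ))
  e k b :=
    if c₂.eps k b.2 ≤ c₁.phi k b.1 then (c₁.e k b.1).map fun x => (x, b.2)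
    else (c₂.e k b.2).map fun x => (b.1, x)
  f k b :=
    if c₂.eps k b.2 < c₁.phi k b.1 then (c₁.f k b.1).map fun x => (x, b.2)
    else (c₂.f k b.2).map fun x => (b.1, x)

/-!
An operator `ẽ_k` whose string function `ε_k` is `ℕ`-valued, vanishes exactly where
`ẽ_k = 0`, and drops by one under `ẽ_k`, can be applied exactly `ε_k(b)` times (induction on
`ε_k(b)`); symmetrically for `f̃_k` and `φ_k`. For normal crystals the tensor product rule becomes the
signature rule `ε_k(b₁ ⊗ b₂) = ε_k(b₁) + max 0 (ε_k(b₂) - φ_k(b₁))`,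
`φ_k(b₁ ⊗ b₂) = φ_k(b₂) + max 0 (φ_k(b₁) - ε_k(b₂))`, from which these three properties of the
tensor product are read off case by case.
-/

lemma eq_coe_sub_one_of_add_one_eq {x : WithBot ℤ} {m : ℤ} (h : x + 1 = m) :
    x = ((m - 1 : ℤ) : WithBot ℤ) := by
  refine WithBot.add_right_cancel WithBot.one_ne_bot ?_
  rw [h]
  norm_cast
  omega

namespace PreCrystal

variable {I P B : Type*}

def swap (c : PreCrystal I P B) : PreCrystal I P B where
  wt := c.wt
  eps := c.phi
  phi := c.eps
  e := c.f
  f := c.e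

lemma swap_eIter (c : PreCrystal I P B) (k : I) (n : ℕ) : c.swap.eIter k n = c.fIter k n := by
  induction n with
  | zero => rfl
  | succ n ih => funext b; simp only [eIter, fIter, ih]; rfl

lemma swap_fIter (c : PreCrystal I P B) (k : I) (n : ℕ) : c.swap.fIter k n = c.eIter k n := by
  induction n with
  | zero => rfl
  | succ n ih => funext b; simp only [eIter, fIter, ih]; rfl

lemma IsNormal.swap {c : PreCrystal I P B} (h : c.IsNormal) : c.swap.IsNormal := fun k b => by
  simp only [swap_eIter, swap_fIter]
  exact (h k b).symm

lemma eIter_succ_of_e_eq_none {c : PreCrystal I P B} {k : I} {b : B} (h : c.e k b = none)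
    (n : ℕ) : c.eIter k (n + 1) b = none := by
  simp [eIter, h]

lemma eIter_of_eps_eq_natCast (c : PreCrystal I P B) (k : I)
    (e_eq_none : ∀ b, c.e k b = none ↔ c.eps k b = 0)
    (eps_e : ∀ b b', c.e k b = some b' → c.eps k b' + 1 = c.eps k b) (m : ℕ) (b : B)
    (hb : c.eps k b = ((m : ℤ) : WithBot ℤ)) :
    c.eIter k m b ≠ none ∧ c.eIter k (m + 1) b = none := by
  induction m generalizing b with
  | zero =>
    exact ⟨Option.some_ne_none b,
      eIter_succ_of_e_eq_none ((e_eq_none b).2 (by exact_mod_cast hb)) 0⟩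
  | succ m ih =>
    obtain ⟨b', hb'⟩ : ∃ b', c.e k b = some b' := by
      refine Option.ne_none_iff_exists'.1 fun h => ?_
      have := hb.symm.trans ((e_eq_none b).1 h)
      norm_cast at this
    have hb'_eps : c.eps k b' = ((m : ℤ) : WithBot ℤ) := by
      simpa using eq_coe_sub_one_of_add_one_eq ((eps_e b b' hb').trans hb)
    simpa only [eIter, hb', Option.bind_some] using ih b' hb'_eps

theorem isNormal_of_forall (c : PreCrystal I P B)
    (exists_eps_eq : ∀ k b, ∃ m : ℕ, c.eps k b = ((m : ℤ) : WithBot ℤ))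
    (exists_phi_eq : ∀ k b, ∃ p : ℕ, c.phi k b = ((p : ℤ) : WithBot ℤ))
    (e_eq_none : ∀ k b, c.e k b = none ↔ c.eps k b = 0)
    (f_eq_none : ∀ k b, c.f k b = none ↔ c.phi k b = 0)
    (eps_e : ∀ k b b', c.e k b = some b' → c.eps k b' + 1 = c.eps k b)
    (phi_f : ∀ k b b', c.f k b = some b' → c.phi k b' + 1 = c.phi k b) :
    c.IsNormal := by
  intro k b
  obtain ⟨m, hm⟩ := exists_eps_eq k b
  obtain ⟨p, hp⟩ := exists_phi_eq k b
  obtain ⟨he₁, he₂⟩ := c.eIter_of_eps_eq_natCast k (e_eq_none k) (eps_e k) m b hm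
  obtain ⟨hf₁, hf₂⟩ := c.swap.eIter_of_eps_eq_natCast k (f_eq_none k) (phi_f k) p b hp
  rw [swap_eIter] at hf₁ hf₂
  exact ⟨⟨m, he₁, he₂, hm⟩, ⟨p, hf₁, hf₂, hp⟩⟩

lemma IsNormal.exists_eps_eq {c : PreCrystal I P B} (h : c.IsNormal) (k : I) (b : B) :
    ∃ m : ℕ, c.eps k b = ((m : ℤ) : WithBot ℤ) :=
  let ⟨⟨m, _, _, hm⟩, _⟩ := h k b
  ⟨m, hm⟩

lemma IsNormal.exists_phi_eq {c : PreCrystal I P B} (h : c.IsNormal) (k : I) (b : B) :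
    ∃ p : ℕ, c.phi k b = ((p : ℤ) : WithBot ℤ) :=
  h.swap.exists_eps_eq k b

lemma IsNormal.e_eq_none_iff {c : PreCrystal I P B} (h : c.IsNormal) (k : I) (b : B) :
    c.e k b = none ↔ c.eps k b = 0 := by
  obtain ⟨⟨m, hm_ne, hm_succ, hm⟩, -⟩ := h k b
  constructor
  · intro he
    cases m with
    | zero => simpa using hm
    | succ m => exact absurd (eIter_succ_of_e_eq_none he m) hm_ne
  · intro h0
    obtain rfl : m = 0 := by
      rw [h0] at hm
      exact_mod_cast hm.symm
    simpa [eIter] using hm_succ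

lemma IsNormal.f_eq_none_iff {c : PreCrystal I P B} (h : c.IsNormal) (k : I) (b : B) :
    c.f k b = none ↔ c.phi k b = 0 :=
  h.swap.e_eq_none_iff k b

section Tensor

variable [AddCommGroup P] {α : I → P} {co : I → P →+ ℤ} {B₁ B₂ : Type*}
  {c₁ : PreCrystal I P B₁} {c₂ : PreCrystal I P B₂} {k : I} {b₁ : B₁} {b₂ : B₂}

lemma tensor_eps_eq (h₁ : IsCrystal α co c₁) {m₁ p₁ m₂ : ℤ} (hm₁ : c₁.eps k b₁ = m₁)
    (hp₁ : c₁.phi k b₁ = p₁) (hm₂ : c₂.eps k b₂ = m₂) :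
    (c₁.tensor co c₂).eps k (b₁, b₂) = ((m₁ + max 0 (m₂ - p₁) : ℤ) : WithBot ℤ) := by
  have hw : p₁ = m₁ + co k (c₁.wt b₁) := by
    have := h₁.phi_eq k b₁
    rw [hm₁, hp₁] at this
    exact_mod_cast this
  simp only [tensor, hm₁, hm₂]
  norm_cast
  omega

lemma tensor_phi_eq (h₂ : IsCrystal α co c₂) {p₁ m₂ p₂ : ℤ} (hp₁ : c₁.phi k b₁ = p₁)
    (hm₂ : c₂.eps k b₂ = m₂) (hp₂ : c₂.phi k b₂ = p₂) :
    (c₁.tensor co c₂).phi k (b₁, b₂) = ((p₂ + max 0 (p₁ - m₂) : ℤ) : WithBot ℤ) := by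
  have hw : p₂ = m₂ + co k (c₂.wt b₂) := by
    have := h₂.phi_eq k b₂
    rw [hm₂, hp₂] at this
    exact_mod_cast this
  simp only [tensor, hp₁, hp₂]
  norm_cast
  omega

lemma tensor_exists_eps_eq (h₁ : IsCrystal α co c₁) (n₁ : c₁.IsNormal) (n₂ : c₂.IsNormal)
    (k : I) (b : B₁ × B₂) : ∃ m : ℕ, (c₁.tensor co c₂).eps k b = ((m : ℤ) : WithBot ℤ) := by
  obtain ⟨m₁, hm₁⟩ := n₁.exists_eps_eq k b.1
  obtain ⟨p₁, hp₁⟩ := n₁.exists_phi_eq k b.1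
  obtain ⟨m₂, hm₂⟩ := n₂.exists_eps_eq k b.2
  refine ⟨(m₁ + max 0 ((m₂ : ℤ) - p₁)).toNat, ?_⟩
  rw [tensor_eps_eq h₁ hm₁ hp₁ hm₂]
  norm_cast
  omega

lemma tensor_exists_phi_eq (h₂ : IsCrystal α co c₂) (n₁ : c₁.IsNormal) (n₂ : c₂.IsNormal)
    (k : I) (b : B₁ × B₂) : ∃ p : ℕ, (c₁.tensor co c₂).phi k b = ((p : ℤ) : WithBot ℤ) := by
  obtain ⟨p₁, hp₁⟩ := n₁.exists_phi_eq k b.1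
  obtain ⟨m₂, hm₂⟩ := n₂.exists_eps_eq k b.2
  obtain ⟨p₂, hp₂⟩ := n₂.exists_phi_eq k b.2
  refine ⟨(p₂ + max 0 ((p₁ : ℤ) - m₂)).toNat, ?_⟩
  rw [tensor_phi_eq h₂ hp₁ hm₂ hp₂]
  norm_cast
  omega

lemma tensor_e_eq_none_iff (h₁ : IsCrystal α co c₁) (n₁ : c₁.IsNormal) (n₂ : c₂.IsNormal)
    (k : I) (b : B₁ × B₂) : (c₁.tensor co c₂).e k b = none ↔ (c₁.tensor co c₂).eps k b = 0 := by
  obtain ⟨m₁, hm₁⟩ := n₁.exists_eps_eq k b.1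
  obtain ⟨p₁, hp₁⟩ := n₁.exists_phi_eq k b.1
  obtain ⟨m₂, hm₂⟩ := n₂.exists_eps_eq k b.2
  rw [tensor_eps_eq h₁ hm₁ hp₁ hm₂]
  simp only [tensor, hm₂, hp₁]
  split_ifs with hle
  · rw [Option.map_eq_none_iff, n₁.e_eq_none_iff, hm₁]
    simp only [WithBot.coe_le_coe, WithBot.coe_eq_zero] at hle ⊢
    omega
  · rw [Option.map_eq_none_iff, n₂.e_eq_none_iff, hm₂]
    simp only [WithBot.coe_le_coe, WithBot.coe_eq_zero] at hle ⊢
    omega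

lemma tensor_f_eq_none_iff (h₂ : IsCrystal α co c₂) (n₁ : c₁.IsNormal) (n₂ : c₂.IsNormal)
    (k : I) (b : B₁ × B₂) : (c₁.tensor co c₂).f k b = none ↔ (c₁.tensor co c₂).phi k b = 0 := by
  obtain ⟨p₁, hp₁⟩ := n₁.exists_phi_eq k b.1
  obtain ⟨m₂, hm₂⟩ := n₂.exists_eps_eq k b.2
  obtain ⟨p₂, hp₂⟩ := n₂.exists_phi_eq k b.2
  rw [tensor_phi_eq h₂ hp₁ hm₂ hp₂]
  simp only [tensor, hm₂, hp₁]
  split_ifs with hlt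
  · rw [Option.map_eq_none_iff, n₁.f_eq_none_iff, hp₁]
    simp only [WithBot.coe_lt_coe, WithBot.coe_eq_zero] at hlt ⊢
    omega
  · rw [Option.map_eq_none_iff, n₂.f_eq_none_iff, hp₂]
    simp only [WithBot.coe_lt_coe, WithBot.coe_eq_zero] at hlt ⊢
    omega

lemma tensor_eps_e (h₁ : IsCrystal α co c₁) (h₂ : IsCrystal α co c₂) (n₁ : c₁.IsNormal)
    (n₂ : c₂.IsNormal) (k : I) (b b' : B₁ × B₂) (he : (c₁.tensor co c₂).e k b = some b') :
    (c₁.tensor co c₂).eps k b' + 1 = (c₁.tensor co c₂).eps k b := by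
  obtain ⟨m₁, hm₁⟩ := n₁.exists_eps_eq k b.1
  obtain ⟨p₁, hp₁⟩ := n₁.exists_phi_eq k b.1
  obtain ⟨m₂, hm₂⟩ := n₂.exists_eps_eq k b.2
  rw [tensor_eps_eq h₁ hm₁ hp₁ hm₂]
  simp only [tensor, hm₂, hp₁] at he
  split_ifs at he with hle <;> obtain ⟨a, ha, rfl⟩ := Option.map_eq_some_iff.1 he
  · have ha_eps := eq_coe_sub_one_of_add_one_eq ((h₁.eps_e k _ _ ha).trans hm₁)
    have ha_phi : c₁.phi k a = ((p₁ + 1 : ℤ) : WithBot ℤ) := by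
      rw [h₁.phi_e k _ _ ha, hp₁]
      norm_cast
    rw [tensor_eps_eq h₁ ha_eps ha_phi hm₂]
    simp only [WithBot.coe_le_coe, ← WithBot.coe_one, ← WithBot.coe_add, WithBot.coe_inj] at hle ⊢
    omega
  · have ha_eps := eq_coe_sub_one_of_add_one_eq ((h₂.eps_e k _ _ ha).trans hm₂)
    rw [tensor_eps_eq h₁ hm₁ hp₁ ha_eps]
    simp only [WithBot.coe_le_coe, ← WithBot.coe_one, ← WithBot.coe_add, WithBot.coe_inj] at hle ⊢
    omega

lemma tensor_phi_f (h₁ : IsCrystal α co c₁) (h₂ : IsCrystal α co c₂) (n₁ : c₁.IsNormal)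
    (n₂ : c₂.IsNormal) (k : I) (b b' : B₁ × B₂) (hf : (c₁.tensor co c₂).f k b = some b') :
    (c₁.tensor co c₂).phi k b' + 1 = (c₁.tensor co c₂).phi k b := by
  obtain ⟨p₁, hp₁⟩ := n₁.exists_phi_eq k b.1
  obtain ⟨m₂, hm₂⟩ := n₂.exists_eps_eq k b.2
  obtain ⟨p₂, hp₂⟩ := n₂.exists_phi_eq k b.2
  rw [tensor_phi_eq h₂ hp₁ hm₂ hp₂]
  simp only [tensor, hm₂, hp₁] at hf
  split_ifs at hf with hlt <;> obtain ⟨a, ha, rfl⟩ := Option.map_eq_some_iff.1 hf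
  · have ha_phi := eq_coe_sub_one_of_add_one_eq ((h₁.phi_f k _ _ ha).trans hp₁)
    rw [tensor_phi_eq h₂ ha_phi hm₂ hp₂]
    simp only [WithBot.coe_lt_coe, ← WithBot.coe_one, ← WithBot.coe_add, WithBot.coe_inj] at hlt ⊢
    omega
  · have ha_phi := eq_coe_sub_one_of_add_one_eq ((h₂.phi_f k _ _ ha).trans hp₂)
    have ha_eps : c₂.eps k a = ((m₂ + 1 : ℤ) : WithBot ℤ) := by
      rw [h₂.eps_f k _ _ ha, hm₂]
      norm_cast
    rw [tensor_phi_eq h₂ hp₁ ha_eps ha_phi]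
    simp only [WithBot.coe_lt_coe, ← WithBot.coe_one, ← WithBot.coe_add, WithBot.coe_inj] at hlt ⊢
    omega

end Tensor

end PreCrystal

/-- the tensor product of two normal crystals is a normal crystal. -/
theorem tensor_isNormal {I P B₁ B₂ : Type*} [AddCommGroup P]
    (α : I → P) (co : I → P →+ ℤ)
    (c₁ : PreCrystal I P B₁) (c₂ : PreCrystal I P B₂)
    (h₁ : IsCrystal α co c₁) (h₂ : IsCrystal α co c₂)
    (n₁ : c₁.IsNormal) (n₂ : c₂.IsNormal) :
    (c₁.tensor co c₂).IsNormal :=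
  open PreCrystal in (c₁.tensor co c₂).isNormal_of_forall (tensor_exists_eps_eq h₁ n₁ n₂)
    (tensor_exists_phi_eq h₂ n₁ n₂) (tensor_e_eq_none_iff h₁ n₁ n₂)
    (tensor_f_eq_none_iff h₂ n₁ n₂) (tensor_eps_e h₁ h₂ n₁ n₂) (tensor_phi_f h₁ h₂ n₁ n₂)
end
end

section
/- Let B₁, …, B_n be crystals and let b_p ∈ B_p for 1 ≤ p ≤ n. Then for every k ∈ I, in the iterated tensor product B₁ ⊗ ⋯ ⊗ B_n: ẽ_k(b₁ ⊗ ⋯ ⊗ b_n) = b₁ ⊗ ⋯ ⊗ (ẽ_k b_p) ⊗ ⋯ ⊗ b_n where p = min{q : ε_k^q = ε_k(b₁ ⊗ ⋯ ⊗ b_n)}, and f̃_k(b₁ ⊗ ⋯ ⊗ b_n) = b₁ ⊗ ⋯ ⊗ (f̃_k b_p) ⊗ ⋯ ⊗ b_n where p = max{q : φ_k^q = φ_k(b₁ ⊗ ⋯ ⊗ b_n)}; here ε_k^p = ε_k(b_p) − ∑_{q < p} wt_k(b_q) and φ_k^p = φ_k(b_p) + ∑_{q > p} wt_k(b_q). 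-/
/-!
Crystals associated with a root datum: a free `ℤ`-module `P` (weight lattice),
simple roots `α k ∈ P` and simple coroots `co k : P →+ ℤ` for `k` in an index
set `I`.  The string functions `ε, φ` take values in `ℤ ∪ {−∞}`, modeled by
`WithBot ℤ`, and the Kashiwara operators `ẽ, f̃` take values in `B ⊔ {0}`,
modeled by `Option B` (`none` playing the role of `0`).
-/

noncomputable section

universe u

/-- The underlying set of the iterated tensor product
`B 0 ⊗ B 1 ⊗ ⋯ ⊗ B n = ((B 0 ⊗ B 1) ⊗ ⋯) ⊗ B n`. -/
def iterType (Bf : ℕ → Type u) : ℕ → Type u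
  | 0 => Bf 0
  | n + 1 => iterType Bf n × Bf (n + 1)

/-- The iterated tensor product crystal
`c 0 ⊗ c 1 ⊗ ⋯ ⊗ c n = ((c 0 ⊗ c 1) ⊗ ⋯) ⊗ c n`. -/
def iterCrys {I P : Type*} [AddCommGroup P] (co : I → P →+ ℤ)
    (Bf : ℕ → Type u) (c : ∀ n, PreCrystal I P (Bf n)) :
    ∀ n : ℕ, PreCrystal I P (iterType Bf n)
  | 0 => c 0
  | n + 1 => PreCrystal.tensor co (iterCrys co Bf c n) (c (n + 1))

/-- The element `b 0 ⊗ b 1 ⊗ ⋯ ⊗ b n` of the iterated tensor product. -/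
def iterElt (Bf : ℕ → Type u) (b : ∀ n, Bf n) : ∀ n : ℕ, iterType Bf n
  | 0 => b 0
  | n + 1 => (iterElt Bf b n, b (n + 1))

/-!
Induction on `n`. With `ε_k^p` as in the statement, `ε_k(b₀ ⊗ ⋯ ⊗ b_n) = max_{p ≤ n} ε_k^p`,
and axiom (i) gives `φ_k^p − φ_k(b₀ ⊗ ⋯ ⊗ b_n) = ε_k^p − ε_k(b₀ ⊗ ⋯ ⊗ b_n)`, so the
conditions on `φ_k^p` are conditions on `ε_k^p`. In `(b₀ ⊗ ⋯ ⊗ b_n) ⊗ b_{n+1}` the tensor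
rule compares `ε_k(b_{n+1})` with `φ_k(b₀ ⊗ ⋯ ⊗ b_n)`, i.e. `ε_k^{n+1}` with
`max_{p ≤ n} ε_k^p`: `ẽ_k` moves to the new factor only if `ε_k^{n+1}` is strictly larger,
`f̃_k` already on a tie, whence the minimal `p` for `ẽ_k` and the maximal one for `f̃_k`.
-/

namespace PreCrystal

variable {I P B₁ B₂ : Type*} [AddCommGroup P] {co : I → P →+ ℤ}
  {c₁ : PreCrystal I P B₁} {c₂ : PreCrystal I P B₂} {k : I}

theorem tensor_phi_eq_s4
    (h₁ : ∀ x, c₁.phi k x = c₁.eps k x + (co k (c₁.wt x) : WithBot ℤ))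
    (h₂ : ∀ x, c₂.phi k x = c₂.eps k x + (co k (c₂.wt x) : WithBot ℤ)) (x : B₁ × B₂) :
    (c₁.tensor co c₂).phi k x
      = (c₁.tensor co c₂).eps k x + (co k ((c₁.tensor co c₂).wt x) : WithBot ℤ) := by
  simp only [tensor, h₁, h₂, map_add, WithBot.coe_add, ← max_add_add_right]
  rw [max_comm]
  congr 1
  · rw [add_assoc]
  · rw [add_assoc]
    norm_cast
    rw [neg_add_cancel_left]

end PreCrystal

open Finset

section IteratedTensor

variable {I P : Type*} [AddCommGroup P] {α : I → P} {co : I → P →+ ℤ}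
  {Bf : ℕ → Type u} {c : ∀ n, PreCrystal I P (Bf n)}

theorem iterCrys_phi_eq (hc : ∀ n, IsCrystal α co (c n)) (k : I) :
    ∀ n x, (iterCrys co Bf c n).phi k x
      = (iterCrys co Bf c n).eps k x + (co k ((iterCrys co Bf c n).wt x) : WithBot ℤ)
  | 0 => (hc 0).phi_eq k
  | n + 1 => PreCrystal.tensor_phi_eq_s4 (iterCrys_phi_eq hc k n) ((hc (n + 1)).phi_eq k)

variable (co c) (b : ∀ n, Bf n) (k : I)

theorem iterCrys_wt_iterElt (n : ℕ) :
    (iterCrys co Bf c n).wt (iterElt Bf b n) = ∑ q ∈ range (n + 1), (c q).wt (b q) := by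
  induction n with
  | zero => simp [iterCrys, iterElt]
  | succ n ih => rw [sum_range_succ, ← ih]; rfl

def wtSum (p : ℕ) : ℤ := ∑ q ∈ range p, co k ((c q).wt (b q))

/-- The quantity `ε_k^p` of the statement. -/
def partialEps (p : ℕ) : WithBot ℤ := (c p).eps k (b p) + ((-wtSum co c b k p : ℤ) : WithBot ℤ)

def iterEps (n : ℕ) : WithBot ℤ := (iterCrys co Bf c n).eps k (iterElt Bf b n)

def iterPhi (n : ℕ) : WithBot ℤ := (iterCrys co Bf c n).phi k (iterElt Bf b n)

theorem iterEps_zero : iterEps co c b k 0 = partialEps co c b k 0 := by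
  simp [iterEps, partialEps, wtSum, iterCrys, iterElt]

theorem iterEps_succ (n : ℕ) :
    iterEps co c b k (n + 1) = max (iterEps co c b k n) (partialEps co c b k (n + 1)) := by
  simp only [iterEps, partialEps, wtSum, iterCrys, iterElt, PreCrystal.tensor,
    iterCrys_wt_iterElt, map_sum]

theorem partialEps_le_iterEps {p n : ℕ} (hp : p ≤ n) :
    partialEps co c b k p ≤ iterEps co c b k n := by
  induction n, hp using Nat.le_induction with
  | base =>
    cases p with
    | zero => rw [iterEps_zero]
    | succ p => rw [iterEps_succ]; exact le_max_right _ _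
  | succ n _ ih => rw [iterEps_succ]; exact le_max_of_le_left ih

theorem exists_partialEps_eq_iterEps (n : ℕ) :
    ∃ p ≤ n, partialEps co c b k p = iterEps co c b k n := by
  induction n with
  | zero => exact ⟨0, le_rfl, (iterEps_zero co c b k).symm⟩
  | succ n ih =>
    rcases le_total (partialEps co c b k (n + 1)) (iterEps co c b k n) with h | h
    · obtain ⟨p, hp, hpn⟩ := ih
      exact ⟨p, hp.trans n.le_succ, by rw [iterEps_succ, max_eq_left h, hpn]⟩
    · exact ⟨n + 1, le_rfl, by rw [iterEps_succ, max_eq_right h]⟩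

theorem eps_eq_partialEps_add (p : ℕ) :
    (c p).eps k (b p) = partialEps co c b k p + (wtSum co c b k p : WithBot ℤ) := by
  rw [partialEps, add_assoc, ← WithBot.coe_add, neg_add_cancel, WithBot.coe_zero, add_zero]

theorem iterPhi_eq (hc : ∀ n, IsCrystal α co (c n)) (n : ℕ) :
    iterPhi co c b k n = iterEps co c b k n + (wtSum co c b k (n + 1) : WithBot ℤ) := by
  rw [iterPhi, iterCrys_phi_eq hc, iterCrys_wt_iterElt, map_sum]
  rfl

/-- The quantity `φ_k^p` of the statement, for the tensor product of `b 0, …, b n`. -/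
def partialPhi (n p : ℕ) : WithBot ℤ :=
  (c p).phi k (b p) + ((∑ q ∈ Ioc p n, co k ((c q).wt (b q)) : ℤ) : WithBot ℤ)

theorem partialPhi_eq (hc : ∀ n, IsCrystal α co (c n)) {n p : ℕ} (hp : p ≤ n) :
    partialPhi co c b k n p = partialEps co c b k p + (wtSum co c b k (n + 1) : WithBot ℤ) := by
  have hsum : wtSum co c b k (n + 1)
      = wtSum co c b k p + co k ((c p).wt (b p)) + ∑ q ∈ Ioc p n, co k ((c q).wt (b q)) := by
    rw [wtSum, wtSum, ← sum_range_succ, ← Ico_add_one_add_one_eq_Ioc,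
      sum_range_add_sum_Ico _ (by omega)]
  rw [partialPhi, (hc p).phi_eq, eps_eq_partialEps_add co, hsum]
  simp only [WithBot.coe_add, add_assoc]

theorem partialPhi_eq_iterPhi_iff (hc : ∀ n, IsCrystal α co (c n)) {n p : ℕ} (hp : p ≤ n) :
    partialPhi co c b k n p = iterPhi co c b k n ↔ partialEps co c b k p = iterEps co c b k n := by
  rw [partialPhi_eq co c b k hc hp, iterPhi_eq co c b k hc]
  exact WithBot.add_right_inj WithBot.coe_ne_bot

theorem eps_succ_le_iterPhi_iff (hc : ∀ n, IsCrystal α co (c n)) (n : ℕ) :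
    (c (n + 1)).eps k (b (n + 1)) ≤ iterPhi co c b k n
      ↔ partialEps co c b k (n + 1) ≤ iterEps co c b k n := by
  rw [eps_eq_partialEps_add co, iterPhi_eq co c b k hc]
  exact WithBot.add_le_add_iff_right WithBot.coe_ne_bot

theorem eps_succ_lt_iterPhi_iff (hc : ∀ n, IsCrystal α co (c n)) (n : ℕ) :
    (c (n + 1)).eps k (b (n + 1)) < iterPhi co c b k n
      ↔ partialEps co c b k (n + 1) < iterEps co c b k n := by
  rw [eps_eq_partialEps_add co, iterPhi_eq co c b k hc]
  exact WithBot.add_lt_add_iff_right WithBot.coe_ne_bot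

theorem iterCrys_e_succ (hc : ∀ n, IsCrystal α co (c n)) (n : ℕ) :
    (iterCrys co Bf c (n + 1)).e k (iterElt Bf b (n + 1)) =
      if partialEps co c b k (n + 1) ≤ iterEps co c b k n then
        ((iterCrys co Bf c n).e k (iterElt Bf b n)).map fun x => (x, b (n + 1))
      else ((c (n + 1)).e k (b (n + 1))).map fun x => (iterElt Bf b n, x) :=
  if_congr (eps_succ_le_iterPhi_iff co c b k hc n) rfl rfl

theorem iterCrys_f_succ (hc : ∀ n, IsCrystal α co (c n)) (n : ℕ) :
    (iterCrys co Bf c (n + 1)).f k (iterElt Bf b (n + 1)) =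
      if partialEps co c b k (n + 1) < iterEps co c b k n then
        ((iterCrys co Bf c n).f k (iterElt Bf b n)).map fun x => (x, b (n + 1))
      else ((c (n + 1)).f k (b (n + 1))).map fun x => (iterElt Bf b n, x) :=
  if_congr (eps_succ_lt_iterPhi_iff co c b k hc n) rfl rfl

theorem iterElt_update_of_lt {n p : ℕ} (h : n < p) (x : Bf p) :
    iterElt Bf (Function.update b p x) n = iterElt Bf b n := by
  induction n with
  | zero => exact Function.update_of_ne h.ne _ _
  | succ n ih => rw [iterElt, iterElt, ih (by omega), Function.update_of_ne h.ne]

theorem iterElt_succ_update_of_le {n p : ℕ} (h : p ≤ n) (x : Bf p) :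
    iterElt Bf (Function.update b p x) (n + 1)
      = (iterElt Bf (Function.update b p x) n, b (n + 1)) := by
  rw [iterElt, Function.update_of_ne (by omega)]

theorem iterElt_succ_update_self (n : ℕ) (x : Bf (n + 1)) :
    iterElt Bf (Function.update b (n + 1) x) (n + 1) = (iterElt Bf b n, x) := by
  rw [iterElt, iterElt_update_of_lt b n.lt_succ_self, Function.update_self]

theorem iterCrys_e_iterElt (hc : ∀ n, IsCrystal α co (c n)) {n p : ℕ} (hp : p ≤ n)
    (hpeq : partialEps co c b k p = iterEps co c b k n)
    (hmin : ∀ q < p, partialEps co c b k q ≠ iterEps co c b k n) :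
    (iterCrys co Bf c n).e k (iterElt Bf b n)
      = ((c p).e k (b p)).map fun x => iterElt Bf (Function.update b p x) n := by
  induction n generalizing p with
  | zero =>
    obtain rfl : p = 0 := by omega
    exact Option.map_id'.symm
  | succ n ih =>
    rw [iterCrys_e_succ co c b k hc]
    split_ifs with hle
    · have hEps : iterEps co c b k (n + 1) = iterEps co c b k n := by
        rw [iterEps_succ, max_eq_left hle]
      have hpn : p ≤ n := by
        by_contra! hpn
        obtain ⟨q, hq, hqeq⟩ := exists_partialEps_eq_iterEps co c b k n
        exact hmin q (by omega) (hqeq.trans hEps.symm)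
      rw [ih hpn (hpeq.trans hEps) (fun q hq => hEps ▸ hmin q hq), Option.map_map]
      simp only [Function.comp_def, iterElt_succ_update_of_le b hpn]
      rfl
    · have hEps : iterEps co c b k (n + 1) = partialEps co c b k (n + 1) := by
        rw [iterEps_succ, max_eq_right (le_of_not_ge hle)]
      obtain rfl : p = n + 1 := by
        by_contra hpn
        have hle' := partialEps_le_iterEps co c b k (show p ≤ n by omega)
        rw [hpeq, hEps] at hle'
        exact hle hle'
      simp only [iterElt_succ_update_self]
      rfl

theorem iterCrys_f_iterElt (hc : ∀ n, IsCrystal α co (c n)) {n p : ℕ} (hp : p ≤ n)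
    (hpeq : partialEps co c b k p = iterEps co c b k n)
    (hmax : ∀ q, p < q → q ≤ n → partialEps co c b k q ≠ iterEps co c b k n) :
    (iterCrys co Bf c n).f k (iterElt Bf b n)
      = ((c p).f k (b p)).map fun x => iterElt Bf (Function.update b p x) n := by
  induction n generalizing p with
  | zero =>
    obtain rfl : p = 0 := by omega
    exact Option.map_id'.symm
  | succ n ih =>
    rw [iterCrys_f_succ co c b k hc]
    split_ifs with hlt
    · have hEps : iterEps co c b k (n + 1) = iterEps co c b k n := by
        rw [iterEps_succ, max_eq_left hlt.le]
      have hpn : p ≤ n := by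
        by_contra! hpn
        obtain rfl : p = n + 1 := by omega
        exact hlt.ne (hpeq.trans hEps)
      rw [ih hpn (hpeq.trans hEps) (fun q hpq hqn => hEps ▸ hmax q hpq (by omega)),
        Option.map_map]
      simp only [Function.comp_def, iterElt_succ_update_of_le b hpn]
      rfl
    · have hEps : iterEps co c b k (n + 1) = partialEps co c b k (n + 1) := by
        rw [iterEps_succ, max_eq_right (le_of_not_gt hlt)]
      obtain rfl : p = n + 1 := by
        by_contra hpn
        exact hmax (n + 1) (by omega) le_rfl hEps.symm
      simp only [iterElt_succ_update_self]
      rfl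

end IteratedTensor

/-- in the iterated tensor product `B 0 ⊗ ⋯ ⊗ B n`, the operator
`ẽ_k` acts on the factor `b_p` where `p` is minimal with
`ε_k^p = ε_k(b₀ ⊗ ⋯ ⊗ b_n)`, and `f̃_k` acts on the factor `b_p` where `p` is
maximal with `φ_k^p = φ_k(b₀ ⊗ ⋯ ⊗ b_n)`; here
`ε_k^p = ε_k(b_p) − ∑_{q<p} wt_k(b_q)` and
`φ_k^p = φ_k(b_p) + ∑_{q>p} wt_k(b_q)`. -/
theorem iter_tensor_e_f {I P : Type*} [AddCommGroup P]
    (α : I → P) (co : I → P →+ ℤ)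
    (Bf : ℕ → Type u) (c : ∀ n, PreCrystal I P (Bf n))
    (hc : ∀ n, IsCrystal α co (c n))
    (b : ∀ n, Bf n) (n : ℕ) (k : I) :
    (∀ p : ℕ, p ≤ n →
      ((c p).eps k (b p)
          + ((-(∑ q ∈ Finset.range p, co k ((c q).wt (b q))) : ℤ) : WithBot ℤ)
        = (iterCrys co Bf c n).eps k (iterElt Bf b n)) →
      (∀ q : ℕ, q < p →
        ((c q).eps k (b q)
            + ((-(∑ r ∈ Finset.range q, co k ((c r).wt (b r))) : ℤ) : WithBot ℤ)
          ≠ (iterCrys co Bf c n).eps k (iterElt Bf b n))) →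
      (iterCrys co Bf c n).e k (iterElt Bf b n)
        = ((c p).e k (b p)).map
            (fun x => iterElt Bf (Function.update b p x) n)) ∧
    (∀ p : ℕ, p ≤ n →
      ((c p).phi k (b p)
          + ((∑ q ∈ Finset.Ioc p n, co k ((c q).wt (b q)) : ℤ) : WithBot ℤ)
        = (iterCrys co Bf c n).phi k (iterElt Bf b n)) →
      (∀ q : ℕ, p < q → q ≤ n →
        ((c q).phi k (b q)
            + ((∑ r ∈ Finset.Ioc q n, co k ((c r).wt (b r)) : ℤ) : WithBot ℤ)
          ≠ (iterCrys co Bf c n).phi k (iterElt Bf b n))) →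
      (iterCrys co Bf c n).f k (iterElt Bf b n)
        = ((c p).f k (b p)).map
            (fun x => iterElt Bf (Function.update b p x) n)) := by
  refine ⟨fun p hp hpeq hmin => iterCrys_e_iterElt co c b k hc hp hpeq hmin,
    fun p hp hpeq hmax => iterCrys_f_iterElt co c b k hc hp ?_ ?_⟩
  · exact (partialPhi_eq_iterPhi_iff co c b k hc hp).mp hpeq
  · intro q hpq hqn hq
    exact hmax q hpq hqn ((partialPhi_eq_iterPhi_iff co c b k hc hqn).mpr hq)
end
end

section
/- In the block-triangular setting below, assume additionally that σ¹ is injective. Then the natural maps — the map Ker τ²/Im σ² → Ker τ/Im σ induced by m² ↦ (0, m²), and the map Ker τ/Im σ → Ker τ̄²¹ induced by (m¹, m²) ↦ [m¹ mod Im σ¹] — are well defined and form a short exact sequence 0 → Ker τ²/Im σ² → Ker τ/Im σ → Ker τ̄²¹ → 0. -/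
/-!
The block-triangular setting: vector spaces `U¹, U², M¹, M², L¹, L²` over a
field `K`, with linear maps `σ¹ : U¹ → M¹`, `τ¹ : M¹ → L¹`, `σ² : U² → M²`,
`τ² : M² → L²`, `σ²¹ : U¹ → M²`, `τ²¹ : M¹ → L²` satisfying `τ¹σ¹ = 0`,
`τ²σ² = 0` and `τ²¹σ¹ + τ²σ²¹ = 0`.  The combined maps are
`σ(u¹, u²) = (σ¹u¹, σ²¹u¹ + σ²u²)` and `τ(m¹, m²) = (τ¹m¹, τ²¹m¹ + τ²m²)`.
-/

noncomputable section

variable {K : Type*} [Field K]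

/-- The block-triangular map `(x, y) ↦ (f x, g x + h y)`. -/
def triMap {A B A' B' : Type*}
    [AddCommGroup A] [Module K A] [AddCommGroup B] [Module K B]
    [AddCommGroup A'] [Module K A'] [AddCommGroup B'] [Module K B']
    (f : A →ₗ[K] A') (g : A →ₗ[K] B') (h : B →ₗ[K] B') :
    (A × B) →ₗ[K] (A' × B') :=
  LinearMap.prod (f ∘ₗ LinearMap.fst K A B)
    (g ∘ₗ LinearMap.fst K A B + h ∘ₗ LinearMap.snd K A B)

variable {U₁ U₂ M₁ M₂ L₁ L₂ : Type*}
  [AddCommGroup U₁] [Module K U₁] [AddCommGroup U₂] [Module K U₂]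
  [AddCommGroup M₁] [Module K M₁] [AddCommGroup M₂] [Module K M₂]
  [AddCommGroup L₁] [Module K L₁] [AddCommGroup L₂] [Module K L₂]

/-!
The sequence is the beginning of the long exact homology sequence of the short exact sequence of
complexes `0 → (U² → M² → L²) → (U → M → L) → (U¹ → M¹ → L¹) → 0`, whose connecting map
`H(M¹) → H(L²) = L²/Im τ²` is `τ̄²¹`. Injectivity of `σ¹` kills `H(U¹)`, the term before
`H(M²)`, so the sequence starts with `0`. The proof chases elements directly.
-/

open LinearMap Submodule

section KerModRange

variable {R : Type*} [Ring R]
  {A B C A' B' C' A'' B'' C'' : Type*}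
  [AddCommGroup A] [Module R A] [AddCommGroup B] [Module R B] [AddCommGroup C] [Module R C]
  [AddCommGroup A'] [Module R A'] [AddCommGroup B'] [Module R B'] [AddCommGroup C'] [Module R C']
  [AddCommGroup A''] [Module R A''] [AddCommGroup B''] [Module R B'']
  [AddCommGroup C''] [Module R C'']

abbrev KerModRange (s : A →ₗ[R] B) (t : B →ₗ[R] C) : Type _ :=
  ker t ⧸ (range s).comap (ker t).subtype

theorem KerModRange.mk_eq_zero_iff {s : A →ₗ[R] B} {t : B →ₗ[R] C} (x : ker t) :
    (Submodule.Quotient.mk x : KerModRange s t) = 0 ↔ (x : B) ∈ range s :=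
  Submodule.Quotient.mk_eq_zero _

variable (s : A →ₗ[R] B) (t : B →ₗ[R] C) (s' : A' →ₗ[R] B') (t' : B' →ₗ[R] C')

def KerModRange.map (f : B →ₗ[R] B') (hker : ∀ x ∈ ker t, f x ∈ ker t')
    (hrange : ∀ x ∈ range s, f x ∈ range s') :
    KerModRange s t →ₗ[R] KerModRange s' t' :=
  mapQ _ _ (f.restrict hker) fun x hx => hrange x hx

variable {s t s' t'} {f : B →ₗ[R] B'} {hker : ∀ x ∈ ker t, f x ∈ ker t'}
  {hrange : ∀ x ∈ range s, f x ∈ range s'}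

@[simp]
theorem KerModRange.map_mk (x : ker t) :
    KerModRange.map s t s' t' f hker hrange (Submodule.Quotient.mk x) =
      Submodule.Quotient.mk ⟨f x, hker x x.2⟩ :=
  rfl

theorem KerModRange.map_injective (h : ∀ x ∈ ker t, f x ∈ range s' → x ∈ range s) :
    Function.Injective (KerModRange.map s t s' t' f hker hrange) := by
  refine (injective_iff_map_eq_zero _).2 fun q hq => ?_
  induction q using Submodule.Quotient.induction_on with | _ x
  rw [KerModRange.map_mk, KerModRange.mk_eq_zero_iff] at hq
  exact (KerModRange.mk_eq_zero_iff x).2 (h x x.2 hq)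

theorem KerModRange.range_map_eq_ker_map {s'' : A'' →ₗ[R] B''} {t'' : B'' →ₗ[R] C''}
    {g : B' →ₗ[R] B''} {hker' : ∀ x ∈ ker t', g x ∈ ker t''}
    {hrange' : ∀ x ∈ range s', g x ∈ range s''}
    (hcomp : ∀ x ∈ ker t, g (f x) ∈ range s'')
    (hexact : ∀ y ∈ ker t', g y ∈ range s'' → ∃ x ∈ ker t, y - f x ∈ range s') :
    range (KerModRange.map s t s' t' f hker hrange) =
      ker (KerModRange.map s' t' s'' t'' g hker' hrange') := by
  apply le_antisymm
  · rintro _ ⟨q, rfl⟩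
    induction q using Submodule.Quotient.induction_on with | _ x
    exact (KerModRange.mk_eq_zero_iff _).2 (hcomp x x.2)
  · intro q hq
    induction q using Submodule.Quotient.induction_on with | _ y
    obtain ⟨x, hx, hxy⟩ := hexact y y.2 ((KerModRange.mk_eq_zero_iff _).1 hq)
    refine ⟨Submodule.Quotient.mk ⟨x, hx⟩, (Submodule.Quotient.eq _).2 ?_⟩
    exact sub_mem_comm_iff.1 hxy

end KerModRange

section TriMap

variable {A B A' B' : Type*}
  [AddCommGroup A] [Module K A] [AddCommGroup B] [Module K B]
  [AddCommGroup A'] [Module K A'] [AddCommGroup B'] [Module K B']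
  {f : A →ₗ[K] A'} {g : A →ₗ[K] B'} {h : B →ₗ[K] B'}

@[simp]
theorem triMap_apply (x : A × B) : triMap f g h x = (f x.1, g x.1 + h x.2) :=
  rfl

theorem mem_ker_triMap {x : A × B} :
    x ∈ ker (triMap f g h) ↔ f x.1 = 0 ∧ g x.1 + h x.2 = 0 := by
  rw [mem_ker, triMap_apply, Prod.mk_eq_zero]

theorem mem_range_triMap {x : A' × B'} :
    x ∈ range (triMap f g h) ↔ ∃ a b, f a = x.1 ∧ g a + h b = x.2 := by
  simp only [mem_range, Prod.exists, triMap_apply, Prod.ext_iff]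

theorem inr_mem_ker_triMap {b : B} (hb : b ∈ ker h) : ((0 : A), b) ∈ ker (triMap f g h) := by
  simpa [mem_ker_triMap] using hb

theorem inr_mem_range_triMap {b : B'} (hb : b ∈ range h) :
    ((0 : A'), b) ∈ range (triMap f g h) := by
  obtain ⟨b, rfl⟩ := hb
  exact mem_range_triMap.2 ⟨0, b, by simp⟩

theorem mem_range_of_inr_mem_range_triMap (hf : Function.Injective f) {b : B'}
    (hb : ((0 : A'), b) ∈ range (triMap f g h)) : b ∈ range h := by
  obtain ⟨a, b', ha, rfl⟩ := mem_range_triMap.1 hb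
  obtain rfl : a = 0 := hf (by simpa using ha)
  exact ⟨b', by simp⟩

theorem fst_mem_ker_of_mem_ker_triMap {x : A × B} (hx : x ∈ ker (triMap f g h)) :
    x.1 ∈ ker f :=
  (mem_ker_triMap.1 hx).1

theorem fst_mem_range_of_mem_range_triMap {x : A' × B'} (hx : x ∈ range (triMap f g h)) :
    x.1 ∈ range f := by
  obtain ⟨a, -, ha, -⟩ := mem_range_triMap.1 hx
  exact ⟨a, ha⟩

theorem apply_fst_mem_range_of_mem_ker_triMap {x : A × B} (hx : x ∈ ker (triMap f g h)) :
    g x.1 ∈ range h :=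
  ⟨-x.2, by rw [map_neg, neg_eq_iff_add_eq_zero, add_comm]; exact (mem_ker_triMap.1 hx).2⟩

theorem exists_mem_ker_triMap_fst_eq {a : A} (ha : a ∈ ker f) (hga : g a ∈ range h) :
    ∃ x ∈ ker (triMap f g h), x.1 = a := by
  obtain ⟨b, hb⟩ := hga
  exact ⟨(a, -b), mem_ker_triMap.2 ⟨ha, by simp [hb]⟩, rfl⟩

end TriMap

section BlockTriangular

variable {σ₁ : U₁ →ₗ[K] M₁} {τ₁ : M₁ →ₗ[K] L₁} {σ₂ : U₂ →ₗ[K] M₂} {τ₂ : M₂ →ₗ[K] L₂}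
  {σ₂₁ : U₁ →ₗ[K] M₂} {τ₂₁ : M₁ →ₗ[K] L₂}

theorem apply_mem_range_of_mem_range (h₂₁ : τ₂₁ ∘ₗ σ₁ + τ₂ ∘ₗ σ₂₁ = 0) {m : M₁}
    (hm : m ∈ range σ₁) : τ₂₁ m ∈ range τ₂ := by
  obtain ⟨u, rfl⟩ := hm
  refine ⟨-σ₂₁ u, ?_⟩
  rw [map_neg, neg_eq_iff_add_eq_zero, add_comm]
  exact LinearMap.congr_fun h₂₁ u

theorem exists_sub_inr_mem_range_triMap (h₂₁ : τ₂₁ ∘ₗ σ₁ + τ₂ ∘ₗ σ₂₁ = 0) {x : M₁ × M₂}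
    (hx : x ∈ ker (triMap τ₁ τ₂₁ τ₂)) (hx₁ : x.1 ∈ range σ₁) :
    ∃ m ∈ ker τ₂, x - ((0 : M₁), m) ∈ range (triMap σ₁ σ₂₁ σ₂) := by
  obtain ⟨u, hu⟩ := hx₁
  refine ⟨x.2 - σ₂₁ u, ?_, mem_range_triMap.2 ⟨u, 0, by simp [hu], by simp⟩⟩
  have hτσ : τ₂ (σ₂₁ u) = -τ₂₁ (σ₁ u) :=
    eq_neg_of_add_eq_zero_right (LinearMap.congr_fun h₂₁ u)
  rw [mem_ker, map_sub, hτσ, hu, sub_neg_eq_add, add_comm]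
  exact (mem_ker_triMap.1 hx).2

variable (σ₁ τ₁ τ₂ τ₂₁) in
def inducedMap (h : ∀ m ∈ range σ₁, τ₂₁ m ∈ range τ₂) :
    KerModRange σ₁ τ₁ →ₗ[K] L₂ ⧸ range τ₂ :=
  mapQ _ _ (τ₂₁ ∘ₗ (ker τ₁).subtype) fun m hm => h m hm

variable (σ₁ τ₁ σ₂ τ₂ σ₂₁ τ₂₁)

def inrKerModRange : KerModRange σ₂ τ₂ →ₗ[K] KerModRange (triMap σ₁ σ₂₁ σ₂) (triMap τ₁ τ₂₁ τ₂) :=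
  KerModRange.map _ _ _ _ (inr K M₁ M₂) (fun _ => inr_mem_ker_triMap) fun _ => inr_mem_range_triMap

def fstKerModRange : KerModRange (triMap σ₁ σ₂₁ σ₂) (triMap τ₁ τ₂₁ τ₂) →ₗ[K] KerModRange σ₁ τ₁ :=
  KerModRange.map _ _ _ _ (fst K M₁ M₂) (fun _ => fst_mem_ker_of_mem_ker_triMap)
    fun _ => fst_mem_range_of_mem_range_triMap

variable {σ₁ τ₁ σ₂ τ₂ σ₂₁ τ₂₁}

theorem inrKerModRange_injective (hσ₁ : Function.Injective σ₁) :
    Function.Injective (inrKerModRange σ₁ τ₁ σ₂ τ₂ σ₂₁ τ₂₁) :=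
  KerModRange.map_injective fun _ _ => mem_range_of_inr_mem_range_triMap hσ₁

theorem range_inrKerModRange (h₂₁ : τ₂₁ ∘ₗ σ₁ + τ₂ ∘ₗ σ₂₁ = 0) :
    range (inrKerModRange σ₁ τ₁ σ₂ τ₂ σ₂₁ τ₂₁) = ker (fstKerModRange σ₁ τ₁ σ₂ τ₂ σ₂₁ τ₂₁) :=
  KerModRange.range_map_eq_ker_map (fun _ _ => zero_mem _)
    fun _ hx hx₁ => exists_sub_inr_mem_range_triMap h₂₁ hx hx₁

theorem inducedMap_fstKerModRange {h : ∀ m ∈ range σ₁, τ₂₁ m ∈ range τ₂}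
    (q : KerModRange (triMap σ₁ σ₂₁ σ₂) (triMap τ₁ τ₂₁ τ₂)) :
    inducedMap σ₁ τ₁ τ₂ τ₂₁ h (fstKerModRange σ₁ τ₁ σ₂ τ₂ σ₂₁ τ₂₁ q) = 0 := by
  induction q using Submodule.Quotient.induction_on with | _ x
  exact (Submodule.Quotient.mk_eq_zero _).2 (apply_fst_mem_range_of_mem_ker_triMap x.2)

theorem surjective_codRestrict_fstKerModRange {h : ∀ m ∈ range σ₁, τ₂₁ m ∈ range τ₂} :
    Function.Surjective ((fstKerModRange σ₁ τ₁ σ₂ τ₂ σ₂₁ τ₂₁).codRestrict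
      (ker (inducedMap σ₁ τ₁ τ₂ τ₂₁ h)) inducedMap_fstKerModRange) := by
  rintro ⟨q, hq⟩
  induction q using Submodule.Quotient.induction_on with | _ m
  obtain ⟨x, hx, hxm⟩ :=
    exists_mem_ker_triMap_fst_eq m.2 ((Submodule.Quotient.mk_eq_zero _).1 (mem_ker.1 hq))
  exact ⟨Submodule.Quotient.mk ⟨x, hx⟩,
    Subtype.ext (congrArg Submodule.Quotient.mk (Subtype.ext hxm))⟩

end BlockTriangular

theorem quotient_short_exact_general
    (σ₁ : U₁ →ₗ[K] M₁) (τ₁ : M₁ →ₗ[K] L₁)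
    (σ₂ : U₂ →ₗ[K] M₂) (τ₂ : M₂ →ₗ[K] L₂)
    (σ₂₁ : U₁ →ₗ[K] M₂) (τ₂₁ : M₁ →ₗ[K] L₂)
    (h₂₁ : τ₂₁ ∘ₗ σ₁ + τ₂ ∘ₗ σ₂₁ = 0)
    (hσ₁ : Function.Injective σ₁) :
    ∃ tbar : (LinearMap.ker τ₁ ⧸
          (LinearMap.range σ₁).comap (LinearMap.ker τ₁).subtype) →ₗ[K]
        (L₂ ⧸ LinearMap.range τ₂),
      (∀ m : LinearMap.ker τ₁,
        tbar (Submodule.Quotient.mk m) = Submodule.Quotient.mk (τ₂₁ (m : M₁))) ∧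
      ∃ (ι : (LinearMap.ker τ₂ ⧸
              (LinearMap.range σ₂).comap (LinearMap.ker τ₂).subtype) →ₗ[K]
            (LinearMap.ker (triMap τ₁ τ₂₁ τ₂) ⧸
              (LinearMap.range (triMap σ₁ σ₂₁ σ₂)).comap
                (LinearMap.ker (triMap τ₁ τ₂₁ τ₂)).subtype))
        (π : (LinearMap.ker (triMap τ₁ τ₂₁ τ₂) ⧸
              (LinearMap.range (triMap σ₁ σ₂₁ σ₂)).comap
                (LinearMap.ker (triMap τ₁ τ₂₁ τ₂)).subtype) →ₗ[K]
            LinearMap.ker tbar),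
        (∀ (m : LinearMap.ker τ₂) (y : LinearMap.ker (triMap τ₁ τ₂₁ τ₂)),
          (y : M₁ × M₂) = ((0 : M₁), (m : M₂)) →
          ι (Submodule.Quotient.mk m) = Submodule.Quotient.mk y) ∧
        (∀ (y : LinearMap.ker (triMap τ₁ τ₂₁ τ₂)) (w : LinearMap.ker τ₁)
            (z : LinearMap.ker tbar),
          (w : M₁) = (y : M₁ × M₂).1 →
          (z : LinearMap.ker τ₁ ⧸
              (LinearMap.range σ₁).comap (LinearMap.ker τ₁).subtype)
            = Submodule.Quotient.mk w →
          π (Submodule.Quotient.mk y) = z) ∧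
        Function.Injective ι ∧
        Function.Surjective π ∧
        LinearMap.range ι = LinearMap.ker π := by
  have hτ : ∀ m ∈ LinearMap.range σ₁, τ₂₁ m ∈ LinearMap.range τ₂ :=
    fun _ => apply_mem_range_of_mem_range h₂₁
  refine ⟨inducedMap σ₁ τ₁ τ₂ τ₂₁ hτ, fun _ => rfl, inrKerModRange σ₁ τ₁ σ₂ τ₂ σ₂₁ τ₂₁,
    (fstKerModRange σ₁ τ₁ σ₂ τ₂ σ₂₁ τ₂₁).codRestrict _ inducedMap_fstKerModRange, ?_, ?_,
    inrKerModRange_injective hσ₁, surjective_codRestrict_fstKerModRange, ?_⟩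
  · intro m y hy
    exact congrArg _ (Subtype.ext hy.symm)
  · intro y w z hw hz
    refine Subtype.ext (Eq.trans ?_ hz.symm)
    exact congrArg Submodule.Quotient.mk (Subtype.ext hw.symm)
  · exact (range_inrKerModRange h₂₁).trans (LinearMap.ker_codRestrict _ _ _).symm

/-- if moreover `σ¹` is injective, then the natural maps
`Ker τ²/Im σ² → Ker τ/Im σ` (induced by `m² ↦ (0, m²)`) and
`Ker τ/Im σ → Ker τ̄²¹` (induced by `(m¹, m²) ↦ [m¹ mod Im σ¹]`, where
`τ̄²¹ : Ker τ¹/Im σ¹ → L²/Im τ²` is induced by `τ²¹`) are well defined and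
form a short exact sequence
`0 → Ker τ²/Im σ² → Ker τ/Im σ → Ker τ̄²¹ → 0`. -/
theorem quotient_short_exact
    (σ₁ : U₁ →ₗ[K] M₁) (τ₁ : M₁ →ₗ[K] L₁)
    (σ₂ : U₂ →ₗ[K] M₂) (τ₂ : M₂ →ₗ[K] L₂)
    (σ₂₁ : U₁ →ₗ[K] M₂) (τ₂₁ : M₁ →ₗ[K] L₂)
    (h₁ : τ₁ ∘ₗ σ₁ = 0) (h₂ : τ₂ ∘ₗ σ₂ = 0)
    (h₂₁ : τ₂₁ ∘ₗ σ₁ + τ₂ ∘ₗ σ₂₁ = 0)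
    (hσ₁ : Function.Injective σ₁) :
    ∃ tbar : (LinearMap.ker τ₁ ⧸
          (LinearMap.range σ₁).comap (LinearMap.ker τ₁).subtype) →ₗ[K]
        (L₂ ⧸ LinearMap.range τ₂),
      (∀ m : LinearMap.ker τ₁,
        tbar (Submodule.Quotient.mk m) = Submodule.Quotient.mk (τ₂₁ (m : M₁))) ∧
      ∃ (ι : (LinearMap.ker τ₂ ⧸
              (LinearMap.range σ₂).comap (LinearMap.ker τ₂).subtype) →ₗ[K]
            (LinearMap.ker (triMap τ₁ τ₂₁ τ₂) ⧸
              (LinearMap.range (triMap σ₁ σ₂₁ σ₂)).comap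
                (LinearMap.ker (triMap τ₁ τ₂₁ τ₂)).subtype))
        (π : (LinearMap.ker (triMap τ₁ τ₂₁ τ₂) ⧸
              (LinearMap.range (triMap σ₁ σ₂₁ σ₂)).comap
                (LinearMap.ker (triMap τ₁ τ₂₁ τ₂)).subtype) →ₗ[K]
            LinearMap.ker tbar),
        (∀ (m : LinearMap.ker τ₂) (y : LinearMap.ker (triMap τ₁ τ₂₁ τ₂)),
          (y : M₁ × M₂) = ((0 : M₁), (m : M₂)) →
          ι (Submodule.Quotient.mk m) = Submodule.Quotient.mk y) ∧
        (∀ (y : LinearMap.ker (triMap τ₁ τ₂₁ τ₂)) (w : LinearMap.ker τ₁)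
            (z : LinearMap.ker tbar),
          (w : M₁) = (y : M₁ × M₂).1 →
          (z : LinearMap.ker τ₁ ⧸
              (LinearMap.range σ₁).comap (LinearMap.ker τ₁).subtype)
            = Submodule.Quotient.mk w →
          π (Submodule.Quotient.mk y) = z) ∧
        Function.Injective ι ∧
        Function.Surjective π ∧
        LinearMap.range ι = LinearMap.ker π :=
  quotient_short_exact_general σ₁ τ₁ σ₂ τ₂ σ₂₁ τ₂₁ h₂₁ hσ₁
end
end

section
/- Let (B, i, j) be a stable framed representation on (V, W). Suppose given direct sum decompositions V_k = ⊕_{m∈ℤ} V_k(m) and W_k = ⊕_{m∈ℤ} W_k(m) with W_k(m) = 0 for all m ∉ {0, 1}, such that B_h(V_{out(h)}(m)) ⊆ V_{in(h)}(m) for all h ∈ H and m ∈ ℤ, i_k(W_k(m)) ⊆ V_k(m) and j_k(V_k(m)) ⊆ W_k(m) for all k ∈ I and m ∈ ℤ. Then V_k(m) = 0 for all m ∉ {0, 1}, and the restrictions of (B, i, j) to (⊕_k V_k(0), ⊕_k W_k(0)) and to (⊕_k V_k(1), ⊕_k W_k(1)) are stable framed representations. -/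
/-!
Framed representations of a quiver attached to a finite graph without edge
loops, with vertex set `I` and edge set `Ω`, where the edge `e ∈ Ω` joins the
vertices `s e` and `t e`.  The set `H` of oriented edges is `Ω ⊕ Ω`: each
edge occurs with both orientations.  For an `I`-graded complex vector space
`V`, a datum `B ∈ E(V,V)` is encoded by its components `Bp e : V (s e) → V (t e)`
(along `e` oriented from `s e` to `t e`) and `Bm e : V (t e) → V (s e)` (along
the reversed orientation); a datum in `L(V,W)` is a family of maps
`V k → W k`.
-/

noncomputable section

variable {I : Type*} {Ω : Type*}

/-- A framed representation `(B, i, j) ∈ E(V,V) ⊕ L(W,V) ⊕ L(V,W)` on the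
pair `(V, W)` of `I`-graded vector spaces. -/
structure FramedRep (s t : Ω → I) (V W : I → Type*)
    [∀ k, AddCommGroup (V k)] [∀ k, Module ℂ (V k)]
    [∀ k, AddCommGroup (W k)] [∀ k, Module ℂ (W k)] where
  Bp : ∀ e, V (s e) →ₗ[ℂ] V (t e)
  Bm : ∀ e, V (t e) →ₗ[ℂ] V (s e)
  i : ∀ k, W k →ₗ[ℂ] V k
  j : ∀ k, V k →ₗ[ℂ] W k

/-- Stability: the only `B`-invariant `I`-graded subspace `S ⊆ V` contained
in `Ker j` is `S = 0`. -/
def FramedRep.IsStable {s t : Ω → I} {V W : I → Type*}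
    [∀ k, AddCommGroup (V k)] [∀ k, Module ℂ (V k)]
    [∀ k, AddCommGroup (W k)] [∀ k, Module ℂ (W k)]
    (R : FramedRep s t V W) : Prop :=
  ∀ S : ∀ k, Submodule ℂ (V k),
    (∀ e, ∀ x ∈ S (s e), R.Bp e x ∈ S (t e)) →
    (∀ e, ∀ x ∈ S (t e), R.Bm e x ∈ S (s e)) →
    (∀ k, ∀ x ∈ S k, R.j k x = 0) →
    ∀ k, S k = ⊥

/-- let `(B,i,j)` be a stable framed representation on `(V,W)`,
with direct sum decompositions `V_k = ⊕_m V_k(m)`, `W_k = ⊕_m W_k(m)` (over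
`m ∈ ℤ`) such that `W_k(m) = 0` for `m ∉ {0,1}`, and such that `B`, `i`, `j`
preserve the gradings.  Then `V_k(m) = 0` for `m ∉ {0,1}`, and the
restrictions of `(B,i,j)` to the degree-`0` and degree-`1` pieces are stable
framed representations. -/
theorem graded_pieces_stable [Fintype I] [Fintype Ω]
    {s t : Ω → I} (hloop : ∀ e, s e ≠ t e)
    {V W : I → Type*}
    [∀ k, AddCommGroup (V k)] [∀ k, Module ℂ (V k)]
    [∀ k, FiniteDimensional ℂ (V k)]
    [∀ k, AddCommGroup (W k)] [∀ k, Module ℂ (W k)]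
    [∀ k, FiniteDimensional ℂ (W k)]
    (R : FramedRep s t V W) (hR : R.IsStable)
    (Vm : ∀ k, ℤ → Submodule ℂ (V k)) (Wm : ∀ k, ℤ → Submodule ℂ (W k))
    (hVint : ∀ k, DirectSum.IsInternal (Vm k))
    (hWint : ∀ k, DirectSum.IsInternal (Wm k))
    (hW01 : ∀ k m, m ≠ 0 → m ≠ 1 → Wm k m = ⊥)
    (hBp : ∀ e m, ∀ x ∈ Vm (s e) m, R.Bp e x ∈ Vm (t e) m)
    (hBm : ∀ e m, ∀ x ∈ Vm (t e) m, R.Bm e x ∈ Vm (s e) m)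
    (hi : ∀ k m, ∀ x ∈ Wm k m, R.i k x ∈ Vm k m)
    (hj : ∀ k m, ∀ x ∈ Vm k m, R.j k x ∈ Wm k m) :
    (∀ k m, m ≠ 0 → m ≠ 1 → Vm k m = ⊥) ∧
    (FramedRep.mk
      (fun e => (R.Bp e).restrict (hBp e 0))
      (fun e => (R.Bm e).restrict (hBm e 0))
      (fun k => (R.i k).restrict (hi k 0))
      (fun k => (R.j k).restrict (hj k 0)) :
      FramedRep s t (fun k => Vm k 0) (fun k => Wm k 0)).IsStable ∧
    (FramedRep.mk
      (fun e => (R.Bp e).restrict (hBp e 1))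
      (fun e => (R.Bm e).restrict (hBm e 1))
      (fun k => (R.i k).restrict (hi k 1))
      (fun k => (R.j k).restrict (hj k 1)) :
      FramedRep s t (fun k => Vm k 1) (fun k => Wm k 1)).IsStable := by
 -- proof
  constructor
  · -- degree vanishing
    intro k m hm0 hm1
    have key : ∀ k', (⨆ m' : {m' : ℤ // m' ≠ 0 ∧ m' ≠ 1}, Vm k' m') = ⊥ := by
      apply hR
      · intro e x hx
        have hle : (⨆ m' : {m' : ℤ // m' ≠ 0 ∧ m' ≠ 1}, Vm (s e) m') ≤
            Submodule.comap (R.Bp e) (⨆ m' : {m' : ℤ // m' ≠ 0 ∧ m' ≠ 1}, Vm (t e) m') :=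
          iSup_le fun m' y hy => Submodule.mem_iSup_of_mem m' (hBp e m' y hy)
        exact hle hx
      · intro e x hx
        have hle : (⨆ m' : {m' : ℤ // m' ≠ 0 ∧ m' ≠ 1}, Vm (t e) m') ≤
            Submodule.comap (R.Bm e) (⨆ m' : {m' : ℤ // m' ≠ 0 ∧ m' ≠ 1}, Vm (s e) m') :=
          iSup_le fun m' y hy => Submodule.mem_iSup_of_mem m' (hBm e m' y hy)
        exact hle hx
      · intro k' x hx
        have : (⨆ m' : {m' : ℤ // m' ≠ 0 ∧ m' ≠ 1}, Vm k' m') ≤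
            LinearMap.ker (R.j k') := by
          refine iSup_le fun m' y hy => ?_
          have := hj k' m' y hy
          rw [hW01 k' m' m'.2.1 m'.2.2] at this
          simpa using this
        exact this hx
    have hle : Vm k m ≤ ⨆ m' : {m' : ℤ // m' ≠ 0 ∧ m' ≠ 1}, Vm k m' :=
      le_iSup (fun m' : {m' : ℤ // m' ≠ 0 ∧ m' ≠ 1} => Vm k m') ⟨m, hm0, hm1⟩
    rw [key k] at hle
    exact le_bot_iff.mp hle
  constructor
  all_goals {
    intro S hSp hSm hSj k
    have key : ∀ k', (S k').map (Vm k' _).subtype = ⊥ := by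
      apply hR
      · intro e x hx
        obtain ⟨y, hy, rfl⟩ := hx
        exact ⟨_, hSp e y hy, rfl⟩
      · intro e x hx
        obtain ⟨y, hy, rfl⟩ := hx
        exact ⟨_, hSm e y hy, rfl⟩
      · intro k' x hx
        obtain ⟨y, hy, rfl⟩ := hx
        have h := hSj k' y hy
        have h2 : ((R.j k').restrict (hj k' _) y : W k') = (0 : W k') := by
          rw [h]; rfl
        simpa using h2
    have h3 := key k
    rw [← Submodule.map_bot (Vm k _).subtype] at h3
    exact Submodule.map_injective_of_injective (Vm k _).injective_subtype h3
  }
end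
end

section
/- Let (B¹, i¹, j¹) be a framed representation on (V¹, W¹) and (B², i², j²) a framed representation on (V², W²), and suppose (B², i², j²) is stable. Then α²¹ is injective: if ξ = (ξ_k) ∈ L(V¹, V²) satisfies B²_h ξ_{out(h)} = ξ_{in(h)} B¹_h for all h ∈ H, ξ_k i¹_k = 0 for all k ∈ I, and j²_k ξ_k = 0 for all k ∈ I, then ξ = 0. -/
/-!
Framed representations of a quiver attached to a finite graph without edge
loops, with vertex set `I` and edge set `Ω`, where the edge `e ∈ Ω` joins the
vertices `s e` and `t e`.  The set `H` of oriented edges is `Ω ⊕ Ω`: each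
edge occurs with both orientations.  For an `I`-graded complex vector space
`V`, a datum `B ∈ E(V,V)` is encoded by its components `Bp e : V (s e) → V (t e)`
(along `e` oriented from `s e` to `t e`) and `Bm e : V (t e) → V (s e)` (along
the reversed orientation); a datum in `L(V,W)` is a family of maps
`V k → W k`.
-/

noncomputable section

variable {I : Type*} {Ω : Type*}

/-- if `(B²,i²,j²)` is stable then `α²¹` is injective: any
`ξ ∈ L(V¹,V²)` with `B²ξ = ξB¹`, `ξ i¹ = 0` and `j² ξ = 0` vanishes. -/
theorem alpha_injective [Fintype I] [Fintype Ω]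
    {s t : Ω → I} (hloop : ∀ e, s e ≠ t e)
    {V₁ W₁ V₂ W₂ : I → Type*}
    [∀ k, AddCommGroup (V₁ k)] [∀ k, Module ℂ (V₁ k)]
    [∀ k, FiniteDimensional ℂ (V₁ k)]
    [∀ k, AddCommGroup (W₁ k)] [∀ k, Module ℂ (W₁ k)]
    [∀ k, FiniteDimensional ℂ (W₁ k)]
    [∀ k, AddCommGroup (V₂ k)] [∀ k, Module ℂ (V₂ k)]
    [∀ k, FiniteDimensional ℂ (V₂ k)]
    [∀ k, AddCommGroup (W₂ k)] [∀ k, Module ℂ (W₂ k)]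
    [∀ k, FiniteDimensional ℂ (W₂ k)]
    (R₁ : FramedRep s t V₁ W₁) (R₂ : FramedRep s t V₂ W₂)
    (h₂ : R₂.IsStable)
    (ξ : ∀ k, V₁ k →ₗ[ℂ] V₂ k)
    (hBp : ∀ e, R₂.Bp e ∘ₗ ξ (s e) = ξ (t e) ∘ₗ R₁.Bp e)
    (hBm : ∀ e, R₂.Bm e ∘ₗ ξ (t e) = ξ (s e) ∘ₗ R₁.Bm e)
    (hi : ∀ k, ξ k ∘ₗ R₁.i k = 0)
    (hj : ∀ k, R₂.j k ∘ₗ ξ k = 0) :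
    ∀ k, ξ k = 0 := by
  have key := h₂ (fun k => LinearMap.range (ξ k))
    (by
      rintro e x ⟨y, rfl⟩
      exact ⟨R₁.Bp e y, (LinearMap.congr_fun (hBp e) y).symm⟩)
    (by
      rintro e x ⟨y, rfl⟩
      exact ⟨R₁.Bm e y, (LinearMap.congr_fun (hBm e) y).symm⟩)
    (by
      rintro k x ⟨y, rfl⟩
      exact LinearMap.congr_fun (hj k) y)
  intro k
  ext x
  have : ξ k x ∈ (⊥ : Submodule ℂ (V₂ k)) := key k ▸ LinearMap.mem_range_self _ x
  simpa using this
end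
end

section
/- Let (B¹, i¹, j¹) be a framed representation on (V¹, W¹) and (B², i², j²) a framed representation on (V², W²), and suppose (B¹, i¹, j¹) is stable. Then β²¹ : E(V¹, V²) ⊕ L(W¹, V²) ⊕ L(V¹, W²) → L(V¹, V²) is surjective. -/
/-!
Framed representations of a quiver attached to a finite graph without edge
loops, with vertex set `I` and edge set `Ω`, where the edge `e ∈ Ω` joins the
vertices `s e` and `t e`.  The set `H` of oriented edges is `Ω ⊕ Ω`: each
edge occurs with both orientations.  For an `I`-graded complex vector space
`V`, a datum `B ∈ E(V,V)` is encoded by its components `Bp e : V (s e) → V (t e)`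
(along `e` oriented from `s e` to `t e`) and `Bm e : V (t e) → V (s e)` (along
the reversed orientation); a datum in `L(V,W)` is a family of maps
`V k → W k`.
-/

noncomputable section

variable {I : Type*} {Ω : Type*}

/-- Transport of graded components along an equality of vertices. -/
def lcast (V : I → Type*) [∀ k, AddCommGroup (V k)] [∀ k, Module ℂ (V k)]
    {a b : I} (h : a = b) : V a →ₗ[ℂ] V b := by
  subst h; exact LinearMap.id

section

variable {s t : Ω → I}
variable {V₁ W₁ V₂ W₂ : I → Type*}
  [∀ k, AddCommGroup (V₁ k)] [∀ k, Module ℂ (V₁ k)]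
  [∀ k, AddCommGroup (W₁ k)] [∀ k, Module ℂ (W₁ k)]
  [∀ k, AddCommGroup (V₂ k)] [∀ k, Module ℂ (V₂ k)]
  [∀ k, AddCommGroup (W₂ k)] [∀ k, Module ℂ (W₂ k)]

/-- The vanishing of the moment map, `μ(B,i,j) = εBB + ij = 0`: for every
vertex `k`, `∑_{h : in(h) = k} ε(h) B_h B_h̄ + i_k j_k = 0`, where the sum over
oriented edges `h` into `k` splits into the edges `e` with `t e = k` (with
sign `eps e`) and those with `s e = k` (with sign `−eps e`). -/
def FramedRep.MuZero [Fintype Ω] [DecidableEq I] (eps : Ω → ℂ)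
    {V W : I → Type*}
    [∀ k, AddCommGroup (V k)] [∀ k, Module ℂ (V k)]
    [∀ k, AddCommGroup (W k)] [∀ k, Module ℂ (W k)]
    (R : FramedRep s t V W) : Prop :=
  ∀ k : I,
    (∑ e : {e : Ω // t e = k},
        eps e.1 • (lcast V e.2 ∘ₗ R.Bp e.1 ∘ₗ R.Bm e.1 ∘ₗ lcast V e.2.symm))
    + (∑ e : {e : Ω // s e = k},
        (-eps e.1) • (lcast V e.2 ∘ₗ R.Bm e.1 ∘ₗ R.Bp e.1 ∘ₗ lcast V e.2.symm))
    + R.i k ∘ₗ R.j k = 0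

/-- The space `E(V¹,V²) ⊕ L(W¹,V²) ⊕ L(V¹,W²)`, middle term of the complex
`L(V¹,V²) → E(V¹,V²) ⊕ L(W¹,V²) ⊕ L(V¹,W²) → L(V¹,V²)`. -/
abbrev ELL (s t : Ω → I) (V₁ W₁ V₂ W₂ : I → Type*)
    [∀ k, AddCommGroup (V₁ k)] [∀ k, Module ℂ (V₁ k)]
    [∀ k, AddCommGroup (W₁ k)] [∀ k, Module ℂ (W₁ k)]
    [∀ k, AddCommGroup (V₂ k)] [∀ k, Module ℂ (V₂ k)]
    [∀ k, AddCommGroup (W₂ k)] [∀ k, Module ℂ (W₂ k)] : Type _ :=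
  (∀ e, V₁ (s e) →ₗ[ℂ] V₂ (t e)) × (∀ e, V₁ (t e) →ₗ[ℂ] V₂ (s e)) ×
  (∀ k, W₁ k →ₗ[ℂ] V₂ k) × (∀ k, V₁ k →ₗ[ℂ] W₂ k)

/-- The map `α²¹ : L(V¹,V²) → E(V¹,V²) ⊕ L(W¹,V²) ⊕ L(V¹,W²)`,
`α²¹(ξ) = (B²ξ − ξB¹, −ξi¹, j²ξ)`. -/
def alphaMap (R₁ : FramedRep s t V₁ W₁) (R₂ : FramedRep s t V₂ W₂)
    (ξ : ∀ k, V₁ k →ₗ[ℂ] V₂ k) : ELL s t V₁ W₁ V₂ W₂ :=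
  ⟨fun e => R₂.Bp e ∘ₗ ξ (s e) - ξ (t e) ∘ₗ R₁.Bp e,
   fun e => R₂.Bm e ∘ₗ ξ (t e) - ξ (s e) ∘ₗ R₁.Bm e,
   fun k => -(ξ k ∘ₗ R₁.i k),
   fun k => R₂.j k ∘ₗ ξ k⟩

/-- The `k`-th component of the map
`β²¹ : E(V¹,V²) ⊕ L(W¹,V²) ⊕ L(V¹,W²) → L(V¹,V²)`,
`β²¹(C,I,J)_k = ∑_{h : in(h)=k} ε(h)(B²_h C_h̄ + C_h B¹_h̄) + i²_k J_k + I_k j¹_k`,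
where the sum over oriented edges `h` into `k` splits into the edges `e` with
`t e = k` (with sign `eps e`) and those with `s e = k` (with sign `−eps e`). -/
def betaMap [Fintype Ω] [DecidableEq I] (eps : Ω → ℂ)
    (R₁ : FramedRep s t V₁ W₁) (R₂ : FramedRep s t V₂ W₂)
    (x : ELL s t V₁ W₁ V₂ W₂) (k : I) : V₁ k →ₗ[ℂ] V₂ k :=
  (∑ e : {e : Ω // t e = k},
      eps e.1 • (lcast V₂ e.2 ∘ₗ (R₂.Bp e.1 ∘ₗ x.2.1 e.1 + x.1 e.1 ∘ₗ R₁.Bm e.1)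
        ∘ₗ lcast V₁ e.2.symm))
  + (∑ e : {e : Ω // s e = k},
      (-eps e.1) • (lcast V₂ e.2 ∘ₗ (R₂.Bm e.1 ∘ₗ x.1 e.1 + x.2.1 e.1 ∘ₗ R₁.Bp e.1)
        ∘ₗ lcast V₁ e.2.symm))
  + R₂.i k ∘ₗ x.2.2.2 k + x.2.2.1 k ∘ₗ R₁.j k

end

/-!
Under the trace pairings `⟨ξ, D⟩ = ∑ₖ tr(ξₖ Dₖ)` on `L(V²,V¹) × L(V¹,V²)` and its ε-twisted
analogue on the middle terms, `β²¹` is the transpose of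
`α¹² : L(V²,V¹) → E(V²,V¹) ⊕ L(W²,V¹) ⊕ L(V²,W¹)`. Both pairings are perfect, so `β²¹` is
surjective as soon as `α¹²` is injective. If `α¹²(ξ) = 0`, then `B¹ξ = ξB²` and `j¹ξ = 0`, so the
image of `ξ` is a `B¹`-invariant graded subspace of `ker j¹`, which vanishes by stability.
-/

open LinearMap Module

section TraceDuality

variable {K : Type*} [Field K]

theorem LinearMap.eq_zero_of_forall_trace_comp_eq_zero {M N : Type*} [AddCommGroup M]
    [Module K M] [FiniteDimensional K M] [AddCommGroup N] [Module K N] {A : N →ₗ[K] M}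
    (h : ∀ X : M →ₗ[K] N, trace K M (A ∘ₗ X) = 0) : A = 0 := by
  ext n
  refine (forall_dual_apply_eq_zero_iff K (A n)).mp fun f => ?_
  have hrank_one : A ∘ₗ f.smulRight n = f.smulRight (A n) := by ext; simp
  simpa [hrank_one] using h (f.smulRight n)

theorem LinearMap.exists_trace_comp_eq {M N : Type*} [AddCommGroup M] [Module K M]
    [FiniteDimensional K M] [AddCommGroup N] [Module K N] [FiniteDimensional K N]
    (φ : Dual K (M →ₗ[K] N)) : ∃ A : N →ₗ[K] M, ∀ X, φ X = trace K M (A ∘ₗ X) := by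
  let τ : (N →ₗ[K] M) →ₗ[K] Dual K (M →ₗ[K] N) :=
    llcomp K (M →ₗ[K] N) (M →ₗ[K] M) K (trace K M) ∘ₗ llcomp K M N M
  have hτ : Function.Injective τ := by
    rw [injective_iff_map_eq_zero]
    exact fun A hA => eq_zero_of_forall_trace_comp_eq_zero fun X => LinearMap.congr_fun hA X
  have hdim : finrank K (N →ₗ[K] M) = finrank K (Dual K (M →ₗ[K] N)) := by
    rw [Subspace.dual_finrank_eq, finrank_linearMap, finrank_linearMap, mul_comm]
  obtain ⟨A, rfl⟩ := (injective_iff_surjective_of_finrank_eq_finrank hdim).mp hτ φ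
  exact ⟨A, fun X => rfl⟩

theorem exists_sum_trace_comp_eq {ι : Type*} [Fintype ι] {M N : ι → Type*}
    [∀ k, AddCommGroup (M k)] [∀ k, Module K (M k)] [∀ k, FiniteDimensional K (M k)]
    [∀ k, AddCommGroup (N k)] [∀ k, Module K (N k)] [∀ k, FiniteDimensional K (N k)]
    (φ : Dual K (∀ k, M k →ₗ[K] N k)) :
    ∃ ξ : ∀ k, N k →ₗ[K] M k, ∀ D, φ D = ∑ k, trace K (M k) (ξ k ∘ₗ D k) := by
  classical
  choose ξ hξ using fun k =>
    exists_trace_comp_eq (φ ∘ₗ LinearMap.single K (fun k => M k →ₗ[K] N k) k)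
  refine ⟨ξ, fun D => ?_⟩
  conv_lhs => rw [← Finset.univ_sum_single D]
  simp only [map_sum, ← hξ, coe_comp, Function.comp_apply, coe_single]

end TraceDuality

section FramedDuality

variable {s t : Ω → I}

theorem trace_comp_lcast {V V' : I → Type*} [∀ k, AddCommGroup (V k)] [∀ k, Module ℂ (V k)]
    [∀ k, AddCommGroup (V' k)] [∀ k, Module ℂ (V' k)] (ξ : ∀ k, V' k →ₗ[ℂ] V k)
    {a b : I} (h : a = b) (T : V a →ₗ[ℂ] V' a) :
    trace ℂ (V b) (ξ b ∘ₗ lcast V' h ∘ₗ T ∘ₗ lcast V h.symm) = trace ℂ (V a) (ξ a ∘ₗ T) := by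
  subst h; rfl

theorem sum_trace_comp_sum_fiber [Fintype I] [DecidableEq I] [Fintype Ω] {V V' : I → Type*}
    [∀ k, AddCommGroup (V k)] [∀ k, Module ℂ (V k)]
    [∀ k, AddCommGroup (V' k)] [∀ k, Module ℂ (V' k)] (ξ : ∀ k, V' k →ₗ[ℂ] V k)
    (f : Ω → I) (c : Ω → ℂ) (T : ∀ e, V (f e) →ₗ[ℂ] V' (f e)) :
    ∑ k, trace ℂ (V k) (ξ k ∘ₗ ∑ e : {e // f e = k},
        c e.1 • (lcast V' e.2 ∘ₗ T e.1 ∘ₗ lcast V e.2.symm)) =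
      ∑ e, c e * trace ℂ (V (f e)) (ξ (f e) ∘ₗ T e) := by
  refine (Finset.sum_congr rfl fun k _ => ?_).trans (Fintype.sum_fiberwise f _)
  rw [← compRight_apply ℂ (ξ k), map_sum, map_sum]
  simp only [compRight_apply, map_smul, trace_comp_lcast, smul_eq_mul]

variable {V₁ W₁ V₂ W₂ : I → Type*}
  [∀ k, AddCommGroup (V₁ k)] [∀ k, Module ℂ (V₁ k)]
  [∀ k, AddCommGroup (W₁ k)] [∀ k, Module ℂ (W₁ k)]
  [∀ k, AddCommGroup (V₂ k)] [∀ k, Module ℂ (V₂ k)]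
  [∀ k, AddCommGroup (W₂ k)] [∀ k, Module ℂ (W₂ k)]

theorem FramedRep.IsStable.eq_zero_of_alphaMap_eq_zero {R₁ : FramedRep s t V₁ W₁}
    {R₂ : FramedRep s t V₂ W₂} (h₂ : R₂.IsStable) {ξ : ∀ k, V₁ k →ₗ[ℂ] V₂ k}
    (hξ : alphaMap R₁ R₂ ξ = 0) : ξ = 0 := by
  have hBp : ∀ e, R₂.Bp e ∘ₗ ξ (s e) = ξ (t e) ∘ₗ R₁.Bp e := fun e =>
    sub_eq_zero.mp (congrFun (congrArg Prod.fst hξ) e)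
  have hBm : ∀ e, R₂.Bm e ∘ₗ ξ (t e) = ξ (s e) ∘ₗ R₁.Bm e := fun e =>
    sub_eq_zero.mp (congrFun (congrArg (·.2.1) hξ) e)
  have hj : ∀ k, R₂.j k ∘ₗ ξ k = 0 := congrFun (congrArg (·.2.2.2) hξ)
  have hrange := h₂ (fun k => range (ξ k))
    (by rintro e _ ⟨y, rfl⟩; exact ⟨R₁.Bp e y, (LinearMap.congr_fun (hBp e) y).symm⟩)
    (by rintro e _ ⟨y, rfl⟩; exact ⟨R₁.Bm e y, (LinearMap.congr_fun (hBm e) y).symm⟩)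
    (by rintro k _ ⟨y, rfl⟩; exact LinearMap.congr_fun (hj k) y)
  exact funext fun k => range_eq_bot.mp (hrange k)

variable [Fintype Ω] [Fintype I]

def ellPairing (eps : Ω → ℂ) (y : ELL s t V₂ W₂ V₁ W₁) (x : ELL s t V₁ W₁ V₂ W₂) : ℂ :=
  ∑ e, eps e * (trace ℂ (V₁ (s e)) (y.2.1 e ∘ₗ x.1 e) - trace ℂ (V₁ (t e)) (y.1 e ∘ₗ x.2.1 e))
  + ∑ k, (trace ℂ (W₁ k) (y.2.2.2 k ∘ₗ x.2.2.1 k) - trace ℂ (V₁ k) (y.2.2.1 k ∘ₗ x.2.2.2 k))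

variable [∀ k, FiniteDimensional ℂ (V₁ k)] [∀ k, FiniteDimensional ℂ (W₁ k)]

theorem eq_zero_of_forall_ellPairing_eq_zero {eps : Ω → ℂ} (heps : ∀ e, eps e ≠ 0)
    {y : ELL s t V₂ W₂ V₁ W₁} (h : ∀ x, ellPairing eps y x = 0) : y = 0 := by
  classical
  refine Prod.ext (funext fun e₀ => ?_) (Prod.ext (funext fun e₀ => ?_)
    (Prod.ext (funext fun k₀ => ?_) (funext fun k₀ => ?_)))
  · refine eq_zero_of_forall_trace_comp_eq_zero fun C => ?_
    have := h (0, Pi.single e₀ C, 0, 0)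
    rw [ellPairing, Fintype.sum_eq_single e₀ fun e he => by simp [Pi.single_eq_of_ne he]] at this
    simpa [heps] using this
  · refine eq_zero_of_forall_trace_comp_eq_zero fun C => ?_
    have := h (Pi.single e₀ C, 0, 0, 0)
    rw [ellPairing, Fintype.sum_eq_single e₀ fun e he => by simp [Pi.single_eq_of_ne he]] at this
    simpa [heps] using this
  · refine eq_zero_of_forall_trace_comp_eq_zero fun J => ?_
    have := h (0, 0, 0, Pi.single k₀ J)
    rw [ellPairing, Fintype.sum_eq_single k₀ fun k hk => by simp [Pi.single_eq_of_ne hk]] at this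
    simpa using this
  · refine eq_zero_of_forall_trace_comp_eq_zero fun C => ?_
    have := h (0, 0, Pi.single k₀ C, 0)
    rw [ellPairing, Fintype.sum_eq_single k₀ fun k hk => by simp [Pi.single_eq_of_ne hk]] at this
    simpa using this

theorem sum_trace_comp_betaMap [DecidableEq I] (eps : Ω → ℂ) (R₁ : FramedRep s t V₁ W₁)
    (R₂ : FramedRep s t V₂ W₂) (ξ : ∀ k, V₂ k →ₗ[ℂ] V₁ k) (x : ELL s t V₁ W₁ V₂ W₂) :
    ∑ k, trace ℂ (V₁ k) (ξ k ∘ₗ betaMap eps R₁ R₂ x k) = ellPairing eps (alphaMap R₂ R₁ ξ) x := by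
  simp only [betaMap, comp_add, map_add, Finset.sum_add_distrib]
  rw [sum_trace_comp_sum_fiber ξ t eps fun e => R₂.Bp e ∘ₗ x.2.1 e + x.1 e ∘ₗ R₁.Bm e,
    sum_trace_comp_sum_fiber ξ s (fun e => -eps e) fun e => R₂.Bm e ∘ₗ x.1 e + x.2.1 e ∘ₗ R₁.Bp e,
    ← Finset.sum_add_distrib, add_assoc, ← Finset.sum_add_distrib, ellPairing]
  congr 1
  · refine Finset.sum_congr rfl fun e _ => ?_
    have hBm := trace_comp_comm' (ξ (t e) ∘ₗ x.1 e) (R₁.Bm e)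
    have hBp := trace_comp_comm' (ξ (s e) ∘ₗ x.2.1 e) (R₁.Bp e)
    simp only [alphaMap, comp_add, sub_comp, map_add, map_sub, comp_assoc] at hBm hBp ⊢
    linear_combination eps e * hBp - eps e * hBm
  · refine Finset.sum_congr rfl fun k _ => ?_
    have hj := trace_comp_comm' (ξ k ∘ₗ x.2.2.1 k) (R₁.j k)
    simp only [alphaMap, neg_comp, map_neg, comp_assoc] at hj ⊢
    linear_combination -hj

def betaMapₗ [DecidableEq I] (eps : Ω → ℂ) (R₁ : FramedRep s t V₁ W₁)
    (R₂ : FramedRep s t V₂ W₂) : ELL s t V₁ W₁ V₂ W₂ →ₗ[ℂ] ∀ k, V₁ k →ₗ[ℂ] V₂ k where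
  toFun := betaMap eps R₁ R₂
  map_add' x y := by
    funext k
    simp only [betaMap, Prod.fst_add, Prod.snd_add, Pi.add_apply, comp_add, add_comp,
      smul_add, Finset.sum_add_distrib]
    abel
  map_smul' c x := by
    funext k
    simp only [betaMap, Prod.smul_fst, Prod.smul_snd, Pi.smul_apply, comp_add, add_comp,
      comp_smul, smul_comp, smul_add, Finset.smul_sum, smul_comm c, RingHom.id_apply]

end FramedDuality

theorem beta_surjective_general [Fintype I] [Fintype Ω] [DecidableEq I]
    {s t : Ω → I}
    (eps : Ω → ℂ) (heps : ∀ e, eps e ≠ 0)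
    {V₁ W₁ V₂ W₂ : I → Type*}
    [∀ k, AddCommGroup (V₁ k)] [∀ k, Module ℂ (V₁ k)]
    [∀ k, FiniteDimensional ℂ (V₁ k)]
    [∀ k, AddCommGroup (W₁ k)] [∀ k, Module ℂ (W₁ k)]
    [∀ k, FiniteDimensional ℂ (W₁ k)]
    [∀ k, AddCommGroup (V₂ k)] [∀ k, Module ℂ (V₂ k)]
    [∀ k, FiniteDimensional ℂ (V₂ k)]
    [∀ k, AddCommGroup (W₂ k)] [∀ k, Module ℂ (W₂ k)]
    (R₁ : FramedRep s t V₁ W₁) (R₂ : FramedRep s t V₂ W₂)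
    (h₁ : R₁.IsStable) :
    ∀ D : ∀ k, V₁ k →ₗ[ℂ] V₂ k, ∃ x : ELL s t V₁ W₁ V₂ W₂,
      ∀ k, betaMap eps R₁ R₂ x k = D k := by
  suffices Function.Surjective (betaMapₗ eps R₁ R₂) from
    fun D => (this D).imp fun x hx => congrFun hx
  rw [← dualMap_injective_iff, injective_iff_map_eq_zero]
  intro φ hφ
  obtain ⟨ξ, hξ⟩ := exists_sum_trace_comp_eq φ
  have hα : alphaMap R₂ R₁ ξ = 0 := eq_zero_of_forall_ellPairing_eq_zero heps fun x => by
    rw [← sum_trace_comp_betaMap, ← hξ]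
    exact LinearMap.congr_fun hφ x
  ext D
  simp [hξ, h₁.eq_zero_of_alphaMap_eq_zero hα]

/-- if `(B¹,i¹,j¹)` is stable then
`β²¹ : E(V¹,V²) ⊕ L(W¹,V²) ⊕ L(V¹,W²) → L(V¹,V²)` is surjective. -/
theorem beta_surjective [Fintype I] [Fintype Ω] [DecidableEq I]
    {s t : Ω → I} (hloop : ∀ e, s e ≠ t e)
    (eps : Ω → ℂ) (heps : ∀ e, eps e ≠ 0)
    {V₁ W₁ V₂ W₂ : I → Type*}
    [∀ k, AddCommGroup (V₁ k)] [∀ k, Module ℂ (V₁ k)]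
    [∀ k, FiniteDimensional ℂ (V₁ k)]
    [∀ k, AddCommGroup (W₁ k)] [∀ k, Module ℂ (W₁ k)]
    [∀ k, FiniteDimensional ℂ (W₁ k)]
    [∀ k, AddCommGroup (V₂ k)] [∀ k, Module ℂ (V₂ k)]
    [∀ k, FiniteDimensional ℂ (V₂ k)]
    [∀ k, AddCommGroup (W₂ k)] [∀ k, Module ℂ (W₂ k)]
    [∀ k, FiniteDimensional ℂ (W₂ k)]
    (R₁ : FramedRep s t V₁ W₁) (R₂ : FramedRep s t V₂ W₂)
    (h₁ : R₁.IsStable) :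
    ∀ D : ∀ k, V₁ k →ₗ[ℂ] V₂ k, ∃ x : ELL s t V₁ W₁ V₂ W₂,
      ∀ k, betaMap eps R₁ R₂ x k = D k :=
  beta_surjective_general eps heps R₁ R₂ h₁
end
end
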